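/- For any hypothesis h in a hypothesis class H, the target-domain risk satisfies R_T(h) ≤ R_S(h) + d_{HΔH}(D_S, D_T) + β, where d_{HΔH}(D_S, D_T) = sup_{h,h'∈H} |E_{x~D_S}[1[h(x)≠h'(x)]] − E_{x~D_T}[1[h(x)≠h'(x)]]| and β = min_{h'∈H} (R_S(h') + R_T(h')). -/
import Mathlib

open MeasureTheory

noncomputable def risk {X : Type*} [MeasurableSpace X] (μ : Measure X)
    (g h : X → Bool) : ℝ := (μ {x | h x ≠ g x}).toReal

noncomputable def dHdH {X : Type*} [MeasurableSpace X] (H : Set (X → Bool))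
    (μS μT : Measure X) : ℝ :=
  sSup {r | ∃ h ∈ H, ∃ h' ∈ H,
    r = |(μS {x | h x ≠ h' x}).toReal - (μT {x | h x ≠ h' x}).toReal|}

noncomputable def betaTerm {X : Type*} [MeasurableSpace X] (H : Set (X → Bool))
    (μS μT : Measure X) (gS gT : X → Bool) : ℝ :=
  sInf {r | ∃ h' ∈ H, r = risk μS gS h' + risk μT gT h'}

private lemma tri_sub {X : Type*} (a b c : X → Bool) :
    {x | a x ≠ c x} ⊆ {x | a x ≠ b x} ∪ {x | b x ≠ c x} := by
  intro x hx
  by_cases hab : a x = b x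
  · right; simp only [Set.mem_setOf_eq]; rw [← hab]; exact hx
  · left; exact hab

private lemma tri_real {X : Type*} [MeasurableSpace X] (μ : Measure X)
    [IsProbabilityMeasure μ] (a b c : X → Bool) :
    (μ {x | a x ≠ c x}).toReal ≤
      (μ {x | a x ≠ b x}).toReal + (μ {x | b x ≠ c x}).toReal := by
  rw [← ENNReal.toReal_add (measure_ne_top μ _) (measure_ne_top μ _)]
  exact ENNReal.toReal_mono (ENNReal.add_ne_top.2 ⟨measure_ne_top μ _, measure_ne_top μ _⟩)
    ((measure_mono (tri_sub a b c)).trans (measure_union_le _ _))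

private lemma toReal_le_one {X : Type*} [MeasurableSpace X] (μ : Measure X)
    [IsProbabilityMeasure μ] (s : Set X) : (μ s).toReal ≤ 1 := by
  have := prob_le_one (μ := μ) (s := s)
  simpa using ENNReal.toReal_mono (by simp) this

theorem domain_adaptation_bound {X : Type*} [MeasurableSpace X]
    (μS μT : Measure X) [IsProbabilityMeasure μS] [IsProbabilityMeasure μT]
    (H : Set (X → Bool)) (gS gT : X → Bool) (h : X → Bool) (hh : h ∈ H) :
    risk μT gT h ≤ risk μS gS h + dHdH H μS μT + betaTerm H μS μT gS gT := by
  have hbddD : BddAbove {r | ∃ h ∈ H, ∃ h' ∈ H,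
      r = |(μS {x | h x ≠ h' x}).toReal - (μT {x | h x ≠ h' x}).toReal|} := by
    refine ⟨1, ?_⟩
    rintro r ⟨a, _, b, _, rfl⟩
    have h1 := toReal_le_one μS {x | a x ≠ b x}
    have h2 := toReal_le_one μT {x | a x ≠ b x}
    have h3 : (0:ℝ) ≤ (μS {x | a x ≠ b x}).toReal := ENNReal.toReal_nonneg
    have h4 : (0:ℝ) ≤ (μT {x | a x ≠ b x}).toReal := ENNReal.toReal_nonneg
    rw [abs_sub_le_iff]; constructor <;> linarith
  have key : ∀ h' ∈ H, risk μT gT h - risk μS gS h - dHdH H μS μT ≤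
      risk μS gS h' + risk μT gT h' := by
    intro h' hh'
    have t1 : risk μT gT h ≤ (μT {x | h x ≠ h' x}).toReal + risk μT gT h' := by
      have := tri_real μT h h' gT
      simpa [risk] using this
    have t2 : (μT {x | h x ≠ h' x}).toReal ≤
        (μS {x | h x ≠ h' x}).toReal + dHdH H μS μT := by
      have hmem : |(μS {x | h x ≠ h' x}).toReal - (μT {x | h x ≠ h' x}).toReal| ∈
          {r | ∃ h ∈ H, ∃ h' ∈ H,
            r = |(μS {x | h x ≠ h' x}).toReal - (μT {x | h x ≠ h' x}).toReal|} :=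
        ⟨h, hh, h', hh', rfl⟩
      have hle := le_csSup hbddD hmem
      have habs := neg_abs_le ((μS {x | h x ≠ h' x}).toReal - (μT {x | h x ≠ h' x}).toReal)
      unfold dHdH
      linarith
    have t3 : (μS {x | h x ≠ h' x}).toReal ≤ risk μS gS h + risk μS gS h' := by
      have := tri_real μS h gS h'
      have e : {x | gS x ≠ h' x} = {x | h' x ≠ gS x} := by
        ext x; simp [ne_comm]
      rw [e] at this
      simpa [risk] using this
    linarith
  have hne : {r | ∃ h' ∈ H, r = risk μS gS h' + risk μT gT h'}.Nonempty :=
    ⟨_, h, hh, rfl⟩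
  have := le_csInf hne (by rintro r ⟨h', hh', rfl⟩; exact key h' hh')
  unfold betaTerm
  linarith
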